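/- arXiv:1002.4106 — 5 statements merged into one kernel-verified Lean document; each statement's English description precedes it below -/
import Mathlib

section
/- Let m ≥ 2 be an integer and let δ₁, δ₂ be real numbers with 0 < δ₁ < m, 0 ≤ δ₂ ≤ m − 1/2, and additionally δ₂ ≤ 5/4 if m = 2. Then there exists a constant c > 0 (one may take c = min(δ₁/2, δ₁(m−δ₁))) such that for all p, ϖ ∈ [0,1): δ₁·(1/2 + (m−1/2−δ₁)·p + p(1−p)(1−ϖ)/(1+p(1−ϖ))) + (1−p)·δ₂·(m−1 + (1/2−δ₂)·ϖ − p·ϖ(1−ϖ)/(1+p(1−ϖ))) − (1−p)·(δ₂²/4)·(1−ϖ)(1−p(1−ϖ))/(1+p(1−ϖ))² ≥ c. -/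
/-!
Write `q = p(1 - ϖ) ∈ [0, 1 - ϖ]`. The quantity splits as
`δ₁ (1/2 + (m - 1/2 - δ₁) p) + δ₁ p (1 - p)(1 - ϖ)/(1 + q) + (1 - p) δ₂ G`,
where the first term is the convex combination `(1 - p)·δ₁/2 + p·δ₁(m - δ₁)`, the second is
nonnegative, and
`G = m - 1 + (1/2 - δ₂) ϖ - ϖ q/(1 + q) - (δ₂/4)(1 - ϖ)(1 - q)/(1 + q)²`.
Taking the worst case `q = 1 - ϖ` in the first fraction and `q = 0` in the second bounds `G`
below by a function of `ϖ` alone, nonnegative when `δ₂ ≤ 5/4`, or when `m ≥ 3` and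
`δ₂ ≤ m - 1/2`.
-/

lemma min_le_mul_one_half_add {a M p : ℝ} (hp0 : 0 ≤ p) (hp1 : p ≤ 1) :
    min (a / 2) (a * (M - a)) ≤ a * (1 / 2 + (M - 1 / 2 - a) * p) := by
  have h₁ : min (a / 2) (a * (M - a)) ≤ a / 2 := min_le_left _ _
  have h₂ : min (a / 2) (a * (M - a)) ≤ a * (M - a) := min_le_right _ _
  calc min (a / 2) (a * (M - a))
      ≤ (1 - p) * (a / 2) + p * (a * (M - a)) := by nlinarith
    _ = a * (1 / 2 + (M - 1 / 2 - a) * p) := by ring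

lemma mul_div_one_add_le_of_le {ϖ q : ℝ} (hϖ0 : 0 ≤ ϖ) (hϖ1 : ϖ < 1) (hq0 : 0 ≤ q)
    (hq : q ≤ 1 - ϖ) : ϖ * q / (1 + q) ≤ ϖ * (1 - ϖ) / (2 - ϖ) := by
  rw [div_le_div_iff₀ (by linarith) (by linarith)]
  nlinarith [mul_nonneg hϖ0 (sub_nonneg.2 hq)]

lemma one_sub_div_one_add_sq_le_one {q : ℝ} (hq : 0 ≤ q) : (1 - q) / (1 + q) ^ 2 ≤ 1 := by
  rw [div_le_one (by positivity)]
  nlinarith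

lemma bisector_bound_nonneg_of_two_le {M δ ϖ : ℝ} (hM : 2 ≤ M) (hδ : δ ≤ 5 / 4)
    (hϖ0 : 0 ≤ ϖ) (hϖ1 : ϖ < 1) :
    0 ≤ M - 1 + (1 / 2 - δ) * ϖ - ϖ * (1 - ϖ) / (2 - ϖ) - δ / 4 * (1 - ϖ) := by
  have h2ϖ : 0 < 2 - ϖ := by linarith
  suffices ϖ * (1 - ϖ) ≤ (M - 1 + (1 / 2 - δ) * ϖ - δ / 4 * (1 - ϖ)) * (2 - ϖ) by
    rw [← div_le_iff₀ h2ϖ] at this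
    linarith
  -- at `M = 2`, `δ = 5/4` the difference is `(23 ϖ² - 41 ϖ + 22)/16`, of negative discriminant
  have hδ_mono : 0 ≤ (5 / 4 - δ) * (4 * ϖ * (2 - ϖ) + (1 - ϖ) * (2 - ϖ)) :=
    mul_nonneg (by linarith) (by nlinarith)
  nlinarith [sq_nonneg (46 * ϖ - 41)]

lemma bisector_bound_nonneg_of_three_le {M δ ϖ : ℝ} (hM : 3 ≤ M) (hδ : δ ≤ M - 1 / 2)
    (hϖ0 : 0 ≤ ϖ) (hϖ1 : ϖ < 1) :
    0 ≤ M - 1 + (1 / 2 - δ) * ϖ - ϖ * (1 - ϖ) / (2 - ϖ) - δ / 4 * (1 - ϖ) := by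
  have h2ϖ : 0 < 2 - ϖ := by linarith
  suffices ϖ * (1 - ϖ) ≤ (M - 1 + (1 / 2 - δ) * ϖ - δ / 4 * (1 - ϖ)) * (2 - ϖ) by
    rw [← div_le_iff₀ h2ϖ] at this
    linarith
  have hδ_mono : 0 ≤ (M - 1 / 2 - δ) * (4 * ϖ * (2 - ϖ) + (1 - ϖ) * (2 - ϖ)) :=
    mul_nonneg (by linarith) (by nlinarith)
  nlinarith [mul_nonneg (sub_nonneg.2 hM) (sub_nonneg.2 hϖ1.le),
    mul_nonneg (sub_nonneg.2 hϖ1.le) (sub_nonneg.2 hϖ1.le)]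

lemma bisector_term_nonneg {M δ ϖ q : ℝ} (hδ : 0 ≤ δ) (hϖ0 : 0 ≤ ϖ) (hϖ1 : ϖ < 1)
    (hq0 : 0 ≤ q) (hq : q ≤ 1 - ϖ)
    (hbound : 0 ≤ M - 1 + (1 / 2 - δ) * ϖ - ϖ * (1 - ϖ) / (2 - ϖ) - δ / 4 * (1 - ϖ)) :
    0 ≤ M - 1 + (1 / 2 - δ) * ϖ - ϖ * q / (1 + q)
      - δ / 4 * ((1 - ϖ) * (1 - q) / (1 + q) ^ 2) := by
  have hfrac := mul_div_one_add_le_of_le hϖ0 hϖ1 hq0 hq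
  have hsq : δ / 4 * ((1 - ϖ) * (1 - q) / (1 + q) ^ 2) ≤ δ / 4 * (1 - ϖ) := by
    rw [mul_div_assoc]
    exact mul_le_mul_of_nonneg_left
      (mul_le_of_le_one_right (by linarith) (one_sub_div_one_add_sq_le_one hq0)) (by linarith)
  linarith

/-- Complex hyperbolic half-space weight lemma (Lemma on weights, complex case):
for `0 < δ₁ < m`, `0 ≤ δ₂ ≤ m - 1/2` (and `δ₂ ≤ 5/4` if `m = 2`), the quantity
`-Δ log w - |d log w|²`, expressed in the variables `p = tanh²(s/2)` and
`ϖ = tanh²(ρ/2)`, is bounded below by a positive constant depending only on `δ₁`. -/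
theorem stmt_1 (m : ℕ) (hm : 2 ≤ m) (δ₁ δ₂ : ℝ)
    (hδ₁pos : 0 < δ₁) (hδ₁lt : δ₁ < (m : ℝ))
    (hδ₂nonneg : 0 ≤ δ₂) (hδ₂le : δ₂ ≤ (m : ℝ) - 1/2)
    (hδ₂le' : m = 2 → δ₂ ≤ 5/4) :
    ∃ c > 0, ∀ p ϖ : ℝ, 0 ≤ p → p < 1 → 0 ≤ ϖ → ϖ < 1 →
      δ₁ * (1/2 + ((m : ℝ) - 1/2 - δ₁) * p
          + p * (1 - p) * (1 - ϖ) / (1 + p * (1 - ϖ)))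
        + (1 - p) * δ₂ * ((m : ℝ) - 1 + (1/2 - δ₂) * ϖ
          - p * ϖ * (1 - ϖ) / (1 + p * (1 - ϖ)))
        - (1 - p) * (δ₂ ^ 2 / 4) *
          ((1 - ϖ) * (1 - p * (1 - ϖ)) / (1 + p * (1 - ϖ)) ^ 2) ≥ c := by
  refine ⟨min (δ₁ / 2) (δ₁ * (m - δ₁)), lt_min (by linarith) (by nlinarith), ?_⟩
  intro p ϖ hp0 hp1 hϖ0 hϖ1
  have hq0 : 0 ≤ p * (1 - ϖ) := mul_nonneg hp0 (by linarith)
  have hq : p * (1 - ϖ) ≤ 1 - ϖ := by nlinarith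
  have hbound : 0 ≤ (m : ℝ) - 1 + (1 / 2 - δ₂) * ϖ - ϖ * (1 - ϖ) / (2 - ϖ)
      - δ₂ / 4 * (1 - ϖ) := by
    rcases hm.eq_or_lt with rfl | h3
    · exact bisector_bound_nonneg_of_two_le (by norm_num) (hδ₂le' rfl) hϖ0 hϖ1
    · exact bisector_bound_nonneg_of_three_le (by exact_mod_cast h3) hδ₂le hϖ0 hϖ1
  have hG := bisector_term_nonneg hδ₂nonneg hϖ0 hϖ1 hq0 hq hbound
  have hmain := min_le_mul_one_half_add (M := m) (a := δ₁) hp0 hp1.le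
  have hextra : 0 ≤ δ₁ * (p * (1 - p) * (1 - ϖ) / (1 + p * (1 - ϖ))) := by
    have : 0 ≤ 1 - p := by linarith
    have : 0 ≤ 1 - ϖ := by linarith
    positivity
  have hG' : 0 ≤ (1 - p) * δ₂ * ((m : ℝ) - 1 + (1 / 2 - δ₂) * ϖ
      - ϖ * (p * (1 - ϖ)) / (1 + p * (1 - ϖ))
      - δ₂ / 4 * ((1 - ϖ) * (1 - p * (1 - ϖ)) / (1 + p * (1 - ϖ)) ^ 2)) :=
    mul_nonneg (mul_nonneg (by linarith) hδ₂nonneg) hG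
  linear_combination hmain + hextra + hG'
end

section
/- Let ℋ, λ ∈ ℝ with ℋ²/4 + λ > 0, and set α₊ = ℋ/2 + √(ℋ²/4+λ), α₋ = ℋ/2 − √(ℋ²/4+λ). Fix s₀ ∈ ℝ. Let u : ℝ → ℝ be continuous with |u(ς)| ≤ C·e^{−ας} for all ς ≥ s₀, where C ≥ 0 and α₋ < α < α₊. Then for all s ≥ s₀: |G₀(u)(s)| ≤ (C/(α₊−α₋))·(1/(α−α₋) + 1/(α₊−α))·e^{−αs}, where G₀(u)(s) = (1/(α₊−α₋))·( −e^{−α₋ s}·∫_s^{∞} e^{α₋ ς} u(ς) dς − e^{−α₊ s}·∫_{s₀}^{s} e^{α₊ ς} u(ς) dς ). -/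
/-!
Multiplying the bound `|u ς| ≤ C e^{-ας}` by `e^{βς}` gives an exponential `C e^{(β-α)ς}`,
which decays when `β = α₋ < α` and grows when `β = α₊ > α`. Hence the tail integral over
`(s, ∞)` and the integral over `[s₀, s]` (dominated by the one over `(-∞, s]`) are both at most
`C e^{(β-α)s} / |α - β|`, and the prefactor `e^{-βs}` turns each into a multiple of `e^{-αs}`.
-/

open MeasureTheory Set Real

lemma abs_exp_mul_le_of_abs_le {α β C x y : ℝ} (h : |y| ≤ C * exp (-α * x)) :
    |exp (β * x) * y| ≤ C * exp ((β - α) * x) :=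
  calc |exp (β * x) * y| = exp (β * x) * |y| := by rw [abs_mul, abs_of_pos (exp_pos _)]
    _ ≤ exp (β * x) * (C * exp (-α * x)) := by gcongr
    _ = C * exp ((β - α) * x) := by rw [mul_left_comm, ← exp_add]; ring_nf

lemma exp_mul_abs_integral_Ioi_le {α β C s : ℝ} {u : ℝ → ℝ} (hβα : β < α)
    (hu : ∀ ς ∈ Ioi s, |u ς| ≤ C * exp (-α * ς)) :
    exp (-β * s) * |∫ ς in Ioi s, exp (β * ς) * u ς| ≤ C / (α - β) * exp (-α * s) := by
  have hneg : β - α < 0 := by linarith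
  have hI : ‖∫ ς in Ioi s, exp (β * ς) * u ς‖ ≤ ∫ ς in Ioi s, C * exp ((β - α) * ς) :=
    norm_integral_le_of_norm_le ((integrableOn_exp_mul_Ioi hneg s).const_mul C)
      (ae_restrict_of_forall_mem measurableSet_Ioi fun ς hς =>
        (norm_eq_abs _).trans_le (abs_exp_mul_le_of_abs_le (hu ς hς)))
  rw [norm_eq_abs, integral_const_mul, integral_exp_mul_Ioi hneg, ← neg_div_neg_eq, neg_neg,
    neg_sub] at hI
  calc exp (-β * s) * |∫ ς in Ioi s, exp (β * ς) * u ς|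
      ≤ exp (-β * s) * (C * (exp ((β - α) * s) / (α - β))) := by gcongr
    _ = C / (α - β) * exp (-α * s) := by
      rw [mul_left_comm, ← mul_div_assoc, ← exp_add]
      ring_nf

lemma exp_mul_abs_intervalIntegral_le {α γ C s₀ s : ℝ} {u : ℝ → ℝ} (hαγ : α < γ) (hC : 0 ≤ C)
    (hs : s₀ ≤ s) (hu : ∀ ς ∈ Ioc s₀ s, |u ς| ≤ C * exp (-α * ς)) :
    exp (-γ * s) * |∫ ς in s₀..s, exp (γ * ς) * u ς| ≤ C / (γ - α) * exp (-α * s) := by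
  have hpos : 0 < γ - α := by linarith
  have hI : ‖∫ ς in s₀..s, exp (γ * ς) * u ς‖ ≤ ∫ ς in s₀..s, C * exp ((γ - α) * ς) :=
    intervalIntegral.norm_integral_le_of_norm_le hs
      (ae_of_all _ fun ς hς => (norm_eq_abs _).trans_le (abs_exp_mul_le_of_abs_le (hu ς hς)))
      ((by fun_prop : Continuous fun ς => C * exp ((γ - α) * ς)).intervalIntegrable _ _)
  have hIic : ∫ ς in s₀..s, C * exp ((γ - α) * ς) ≤ ∫ ς in Iic s, C * exp ((γ - α) * ς) := by
    rw [intervalIntegral.integral_of_le hs]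
    exact setIntegral_mono_set ((integrableOn_exp_mul_Iic hpos s).const_mul C)
      (ae_of_all _ fun ς => by positivity) Ioc_subset_Iic_self.eventuallyLE
  rw [norm_eq_abs] at hI
  rw [integral_const_mul, integral_exp_mul_Iic hpos] at hIic
  calc exp (-γ * s) * |∫ ς in s₀..s, exp (γ * ς) * u ς|
      ≤ exp (-γ * s) * (C * (exp ((γ - α) * s) / (γ - α))) := by
        gcongr; exact hI.trans hIic
    _ = C / (γ - α) * exp (-α * s) := by
      rw [mul_left_comm, ← mul_div_assoc, ← exp_add]
      ring_nf

theorem stmt_9_general (αp αm : ℝ)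
    (s₀ : ℝ)
    (u : ℝ → ℝ)
    (C α : ℝ) (hC : 0 ≤ C) (hα₁ : αm < α) (hα₂ : α < αp)
    (hbound : ∀ ς : ℝ, s₀ ≤ ς → |u ς| ≤ C * Real.exp (-α * ς)) :
    ∀ s : ℝ, s₀ ≤ s →
      |(1 / (αp - αm)) *
        (-(Real.exp (-αm * s) * ∫ ς in Set.Ioi s, Real.exp (αm * ς) * u ς)
          - Real.exp (-αp * s) * ∫ ς in s₀..s, Real.exp (αp * ς) * u ς)|
      ≤ (C / (αp - αm)) * (1 / (α - αm) + 1 / (αp - α)) * Real.exp (-α * s) := by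
  intro s hs
  have hD : 0 < αp - αm := by linarith
  have htail := exp_mul_abs_integral_Ioi_le hα₁ fun ς hς => hbound ς (hs.trans hς.le)
  have hinit := exp_mul_abs_intervalIntegral_le hα₂ hC hs fun ς hς => hbound ς hς.1.le
  set I := ∫ ς in Ioi s, exp (αm * ς) * u ς
  set J := ∫ ς in s₀..s, exp (αp * ς) * u ς
  have htri : |-(exp (-αm * s) * I) - exp (-αp * s) * J|
      ≤ exp (-αm * s) * |I| + exp (-αp * s) * |J| :=
    (abs_sub _ _).trans_eq <| by
      rw [abs_neg, abs_mul, abs_mul, abs_of_pos (exp_pos _), abs_of_pos (exp_pos _)]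
  calc |1 / (αp - αm) * (-(exp (-αm * s) * I) - exp (-αp * s) * J)|
      = 1 / (αp - αm) * |-(exp (-αm * s) * I) - exp (-αp * s) * J| := by
        rw [abs_mul, abs_of_pos (one_div_pos.mpr hD)]
    _ ≤ 1 / (αp - αm) * (C / (α - αm) * exp (-α * s) + C / (αp - α) * exp (-α * s)) :=
        mul_le_mul_of_nonneg_left (htri.trans (by linarith)) (by positivity)
    _ = C / (αp - αm) * (1 / (α - αm) + 1 / (αp - α)) * exp (-α * s) := by ring

/-- Property (2) of `G₀`: for `αm < α < αp`, the operator `G₀` preserves the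
space `C⁰_α` of functions bounded by a constant times `e^{-αs}`. -/
theorem stmt_9 (ℋ lam : ℝ) (hpos : 0 < ℋ ^ 2 / 4 + lam)
    (αp αm : ℝ)
    (hαp : αp = ℋ / 2 + Real.sqrt (ℋ ^ 2 / 4 + lam))
    (hαm : αm = ℋ / 2 - Real.sqrt (ℋ ^ 2 / 4 + lam))
    (s₀ : ℝ)
    (u : ℝ → ℝ) (hu : Continuous u)
    (C α : ℝ) (hC : 0 ≤ C) (hα₁ : αm < α) (hα₂ : α < αp)
    (hbound : ∀ ς : ℝ, s₀ ≤ ς → |u ς| ≤ C * Real.exp (-α * ς)) :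
    ∀ s : ℝ, s₀ ≤ s →
      |(1 / (αp - αm)) *
        (-(Real.exp (-αm * s) * ∫ ς in Set.Ioi s, Real.exp (αm * ς) * u ς)
          - Real.exp (-αp * s) * ∫ ς in s₀..s, Real.exp (αp * ς) * u ς)|
      ≤ (C / (αp - αm)) * (1 / (α - αm) + 1 / (αp - α)) * Real.exp (-α * s) :=
  stmt_9_general αp αm s₀ u C α hC hα₁ hα₂ hbound
end

section
/- Let ℋ, λ ∈ ℝ with ℋ²/4 + λ > 0, and set α₊ = ℋ/2 + √(ℋ²/4+λ), α₋ = ℋ/2 − √(ℋ²/4+λ). Fix s₀ ∈ ℝ. Let u : ℝ → ℝ be continuous with |u(ς)| ≤ C·e^{−α₊ς} for all ς ≥ s₀, where C ≥ 0. Then for all s ≥ s₀: |G₀(u)(s)| ≤ (C/(α₊−α₋))·( 1/(α₊−α₋) + (s − s₀) )·e^{−α₊ s}, where G₀(u)(s) = (1/(α₊−α₋))·( −e^{−α₋ s}·∫_s^{∞} e^{α₋ ς} u(ς) dς − e^{−α₊ s}·∫_{s₀}^{s} e^{α₊ ς} u(ς) dς ). -/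
open MeasureTheory Real Set

/-!
The integrand of each integral in `G₀ u` is bounded by `C e^{(α - α₊) ς}` for its weight `α`.
For `α = α₊` this is the constant `C`, so the integral over `[s₀, s]` grows linearly and gives the
`s - s₀` term; for `α = α₋ < α₊` it decays, and the tail integral over `(s, ∞)` is at most
`C e^{(α₋ - α₊) s} / (α₊ - α₋)`, which the prefactor `e^{-α₋ s}` turns into `C e^{-α₊ s} / (α₊ - α₋)`.
-/

section ExponentialWeight

variable {u : ℝ → ℝ} {a C : ℝ}

lemma abs_exp_mul_mul_le {x : ℝ} (b : ℝ) (h : |u x| ≤ C * exp (-a * x)) :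
    |exp (b * x) * u x| ≤ C * exp ((b - a) * x) :=
  calc |exp (b * x) * u x| = exp (b * x) * |u x| := by rw [abs_mul, abs_of_pos (exp_pos _)]
    _ ≤ exp (b * x) * (C * exp (-a * x)) := by gcongr
    _ = C * exp ((b - a) * x) := by rw [mul_left_comm, ← exp_add]; ring_nf

lemma abs_intervalIntegral_exp_mul_le {s₀ s : ℝ} (hs : s₀ ≤ s)
    (h : ∀ x ∈ Icc s₀ s, |u x| ≤ C * exp (-a * x)) :
    |∫ x in s₀..s, exp (a * x) * u x| ≤ C * (s - s₀) := by
  have hle : ∀ x ∈ uIoc s₀ s, ‖exp (a * x) * u x‖ ≤ C := by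
    intro x hx
    rw [uIoc_of_le hs] at hx
    simpa using abs_exp_mul_mul_le a (h x (Ioc_subset_Icc_self hx))
  simpa [abs_of_nonneg (sub_nonneg.2 hs)] using
    intervalIntegral.norm_integral_le_of_norm_le_const hle

lemma abs_setIntegral_Ioi_exp_mul_le {b s : ℝ} (hba : b < a)
    (h : ∀ x ∈ Ioi s, |u x| ≤ C * exp (-a * x)) :
    |∫ x in Ioi s, exp (b * x) * u x| ≤ C * exp ((b - a) * s) / (a - b) := by
  have hba' : b - a < 0 := sub_neg.2 hba
  have hmaj : ∀ᵐ x ∂volume.restrict (Ioi s), ‖exp (b * x) * u x‖ ≤ C * exp ((b - a) * x) := by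
    filter_upwards [ae_restrict_mem measurableSet_Ioi] with x hx
    exact abs_exp_mul_mul_le b (h x hx)
  calc |∫ x in Ioi s, exp (b * x) * u x|
      ≤ ∫ x in Ioi s, C * exp ((b - a) * x) := norm_integral_le_of_norm_le
        ((integrableOn_exp_mul_Ioi hba' s).const_mul C) hmaj
    _ = C * exp ((b - a) * s) / (a - b) := by
      rw [integral_const_mul, integral_exp_mul_Ioi hba', neg_div, ← div_neg, neg_sub, mul_div]

end ExponentialWeight

theorem stmt_10_general (ℋ lam : ℝ) (hpos : 0 < ℋ ^ 2 / 4 + lam)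
    (αp αm : ℝ)
    (hαp : αp = ℋ / 2 + Real.sqrt (ℋ ^ 2 / 4 + lam))
    (hαm : αm = ℋ / 2 - Real.sqrt (ℋ ^ 2 / 4 + lam))
    (s₀ : ℝ)
    (u : ℝ → ℝ)
    (C : ℝ)
    (hbound : ∀ ς : ℝ, s₀ ≤ ς → |u ς| ≤ C * Real.exp (-αp * ς)) :
    ∀ s : ℝ, s₀ ≤ s →
      |(1 / (αp - αm)) *
        (-(Real.exp (-αm * s) * ∫ ς in Set.Ioi s, Real.exp (αm * ς) * u ς)
          - Real.exp (-αp * s) * ∫ ς in s₀..s, Real.exp (αp * ς) * u ς)|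
      ≤ (C / (αp - αm)) * (1 / (αp - αm) + (s - s₀)) * Real.exp (-αp * s) := by
  intro s hs
  have hgap : αm < αp := by
    have := Real.sqrt_pos.2 hpos
    linarith
  have hd : 0 < αp - αm := sub_pos.2 hgap
  have hTail := abs_setIntegral_Ioi_exp_mul_le hgap fun x hx => hbound x (hs.trans hx.le)
  have hBulk := abs_intervalIntegral_exp_mul_le hs fun x hx => hbound x hx.1
  have hWeights : exp (-αm * s) * exp ((αm - αp) * s) = exp (-αp * s) := by
    rw [← exp_add]; ring_nf
  rw [abs_mul, abs_of_pos (one_div_pos.2 hd)]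
  calc 1 / (αp - αm) * |-(exp (-αm * s) * ∫ ς in Ioi s, exp (αm * ς) * u ς)
        - exp (-αp * s) * ∫ ς in s₀..s, exp (αp * ς) * u ς|
      ≤ 1 / (αp - αm) * (exp (-αm * s) * (C * exp ((αm - αp) * s) / (αp - αm))
        + exp (-αp * s) * (C * (s - s₀))) := by
        gcongr
        refine (abs_sub _ _).trans ?_
        rw [abs_neg, abs_mul, abs_mul, abs_of_pos (exp_pos _), abs_of_pos (exp_pos _)]
        gcongr
    _ = C / (αp - αm) * (1 / (αp - αm) + (s - s₀)) * exp (-αp * s) := by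
        rw [mul_div_assoc', mul_left_comm, hWeights]
        field_simp

/-- Property (2) of `G₀`, critical case: applied to a function decaying like
`e^{-αp s}`, `G₀` produces at worst a linear-in-`s` correction to the weight. -/
theorem stmt_10 (ℋ lam : ℝ) (hpos : 0 < ℋ ^ 2 / 4 + lam)
    (αp αm : ℝ)
    (hαp : αp = ℋ / 2 + Real.sqrt (ℋ ^ 2 / 4 + lam))
    (hαm : αm = ℋ / 2 - Real.sqrt (ℋ ^ 2 / 4 + lam))
    (s₀ : ℝ)
    (u : ℝ → ℝ) (hu : Continuous u)
    (C : ℝ) (hC : 0 ≤ C)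
    (hbound : ∀ ς : ℝ, s₀ ≤ ς → |u ς| ≤ C * Real.exp (-αp * ς)) :
    ∀ s : ℝ, s₀ ≤ s →
      |(1 / (αp - αm)) *
        (-(Real.exp (-αm * s) * ∫ ς in Set.Ioi s, Real.exp (αm * ς) * u ς)
          - Real.exp (-αp * s) * ∫ ς in s₀..s, Real.exp (αp * ς) * u ς)|
      ≤ (C / (αp - αm)) * (1 / (αp - αm) + (s - s₀)) * Real.exp (-αp * s) :=
  stmt_10_general ℋ lam hpos αp αm hαp hαm s₀ u C hbound
end

section
/- There exists a constant K > 0 (one may take K = 2) such that for all real numbers s and ρ, writing p = tanh(s/2), c = cosh(ρ/2), σ = sinh(ρ/2) and D = c² + p², one has: (i) |p·(4 + σ²·(3 − p²))| / (2D) ≤ K; (ii) |sinh(ρ)| / (2·cosh³(s/2)·D) ≤ K; (iii) |p·(1 + p²·c²)| / (2D) ≤ K. -/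
/-!
Since `|tanh (s/2)| < 1`, `cosh (ρ/2) ^ 2 = 1 + sinh (ρ/2) ^ 2 ≥ 1` and `cosh (s/2) ≥ 1`, every
numerator is at most `4 cosh (ρ/2) ^ 2`, while every denominator is at least `2 cosh (ρ/2) ^ 2`.
-/

open Real

lemma Real.abs_tanh_le_one (x : ℝ) : |tanh x| ≤ 1 :=
  abs_le.mpr ⟨(neg_one_lt_tanh x).le, (tanh_lt_one x).le⟩

lemma Real.abs_sinh_le_cosh (x : ℝ) : |sinh x| ≤ cosh x := by
  refine abs_le.mpr ⟨?_, (sinh_lt_cosh x).le⟩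
  have := sinh_lt_cosh (-x)
  rw [sinh_neg, cosh_neg] at this
  linarith

lemma Real.abs_sinh_le_two_mul_cosh_half_sq (x : ℝ) : |sinh x| ≤ 2 * cosh (x / 2) ^ 2 := by
  have hx : cosh x = cosh (x / 2) ^ 2 + sinh (x / 2) ^ 2 := by
    rw [← cosh_two_mul, mul_div_cancel₀ x two_ne_zero]
  have := cosh_sq (x / 2)
  linarith [abs_sinh_le_cosh x]

lemma abs_mul_four_add_sq_mul_le {p σ : ℝ} (hp : |p| ≤ 1) :
    |p * (4 + σ ^ 2 * (3 - p ^ 2))| ≤ 4 * (1 + σ ^ 2) := by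
  have hp2 : p ^ 2 ≤ 1 := sq_le_one_iff_abs_le_one p |>.mpr hp
  have hσp : 0 ≤ σ ^ 2 * p ^ 2 := by positivity
  have hX : 0 ≤ 4 + σ ^ 2 * (3 - p ^ 2) := by nlinarith [sq_nonneg σ]
  rw [abs_mul, abs_of_nonneg hX]
  calc |p| * (4 + σ ^ 2 * (3 - p ^ 2)) ≤ 1 * (4 + σ ^ 2 * (3 - p ^ 2)) :=
        mul_le_mul_of_nonneg_right hp hX
    _ ≤ 4 * (1 + σ ^ 2) := by nlinarith [sq_nonneg σ]

lemma abs_mul_one_add_sq_mul_le {p c : ℝ} (hp : |p| ≤ 1) :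
    |p * (1 + p ^ 2 * c ^ 2)| ≤ 1 + c ^ 2 := by
  have hp2 : p ^ 2 ≤ 1 := sq_le_one_iff_abs_le_one p |>.mpr hp
  have hX : 0 ≤ 1 + p ^ 2 * c ^ 2 := by positivity
  rw [abs_mul, abs_of_nonneg hX]
  calc |p| * (1 + p ^ 2 * c ^ 2) ≤ 1 * (1 + p ^ 2 * c ^ 2) :=
        mul_le_mul_of_nonneg_right hp hX
    _ ≤ 1 + c ^ 2 := by nlinarith [sq_nonneg c]

/-- Uniform bound on the entries of the second fundamental form of the
hypersurfaces equidistant from a bisector in complex hyperbolic space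
(Lemma 1.2 of the paper). -/
theorem stmt_13 :
    ∃ K > 0, ∀ s ρ : ℝ,
      |Real.tanh (s / 2) * (4 + Real.sinh (ρ / 2) ^ 2 * (3 - Real.tanh (s / 2) ^ 2))|
          / (2 * (Real.cosh (ρ / 2) ^ 2 + Real.tanh (s / 2) ^ 2)) ≤ K ∧
      |Real.sinh ρ|
          / (2 * Real.cosh (s / 2) ^ 3 * (Real.cosh (ρ / 2) ^ 2 + Real.tanh (s / 2) ^ 2)) ≤ K ∧
      |Real.tanh (s / 2) * (1 + Real.tanh (s / 2) ^ 2 * Real.cosh (ρ / 2) ^ 2)|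
          / (2 * (Real.cosh (ρ / 2) ^ 2 + Real.tanh (s / 2) ^ 2)) ≤ K := by
  refine ⟨2, two_pos, fun s ρ => ?_⟩
  have hp := abs_tanh_le_one (s / 2)
  have hc : cosh (ρ / 2) ^ 2 = sinh (ρ / 2) ^ 2 + 1 := cosh_sq _
  have hc1 : 1 ≤ cosh (ρ / 2) ^ 2 := one_le_pow₀ (one_le_cosh _)
  have hch : 1 ≤ cosh (s / 2) ^ 3 := one_le_pow₀ (one_le_cosh _)
  have hD : cosh (ρ / 2) ^ 2 ≤ cosh (ρ / 2) ^ 2 + tanh (s / 2) ^ 2 :=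
    le_add_of_nonneg_right (sq_nonneg _)
  have hDch : cosh (ρ / 2) ^ 2 + tanh (s / 2) ^ 2
      ≤ cosh (s / 2) ^ 3 * (cosh (ρ / 2) ^ 2 + tanh (s / 2) ^ 2) :=
    le_mul_of_one_le_left (by positivity) hch
  refine ⟨?_, ?_, ?_⟩ <;> rw [div_le_iff₀ (by positivity)]
  · linarith [abs_mul_four_add_sq_mul_le (σ := sinh (ρ / 2)) hp]
  · linarith [abs_sinh_le_two_mul_cosh_half_sq ρ]
  · linarith [abs_mul_one_add_sq_mul_le (c := cosh (ρ / 2)) hp]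
end

section
/- Let x > 0, y ≥ 0 and φ ≥ 0 be real numbers. Set ϱ = √((x+φ)² + y²), u = 2x/(x − φ + ϱ), v = √((x − φ + ϱ)/(x + φ + ϱ)) and V = v·√(1 − u). Then: 0 < u ≤ 1, 0 < v ≤ 1, and x = u·v²·ϱ/(1 + V²), y = 2·V·ϱ/(1 + V²), x + φ = ϱ·(1 − V²)/(1 + V²). -/
/-!
Write `a = x + φ`, so that `ϱ ≥ a > 0` is the modulus of `(a, y)`. Since
`1 - u = (ϱ - a) / (x - φ + ϱ)`, the factor `x - φ + ϱ` cancels in `V² = v² (1 - u)`, leaving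
`V² = (ϱ - a) / (ϱ + a)`. Hence `V` is the tangent of half the angle of `(a, y)`, and the
formulas for `x + φ` and `y` are the tangent half-angle parametrization of `(a, y) = ϱ (cos θ, sin θ)`;
the one for `x` follows from `u v² = 2x / (ϱ + a)` and `1 + V² = 2ϱ / (ϱ + a)`.
-/

open Real

section TangentHalfAngle

variable {ϱ a V : ℝ}

lemma one_add_sq_eq_of_sq_eq (ha : 0 < ϱ + a) (hV : V ^ 2 = (ϱ - a) / (ϱ + a)) :
    1 + V ^ 2 = 2 * ϱ / (ϱ + a) := by
  rw [hV]
  field_simp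
  ring

lemma mul_one_sub_sq_div_one_add_sq_of_sq_eq (hϱ : 0 < ϱ) (ha : 0 < ϱ + a)
    (hV : V ^ 2 = (ϱ - a) / (ϱ + a)) :
    ϱ * (1 - V ^ 2) / (1 + V ^ 2) = a := by
  rw [one_add_sq_eq_of_sq_eq ha hV, hV]
  field_simp
  ring

lemma two_mul_mul_div_one_add_sq_of_sq_eq {y : ℝ} (hϱ : 0 < ϱ) (ha : 0 < ϱ + a) (hy : 0 ≤ y)
    (hV0 : 0 ≤ V) (hϱy : ϱ ^ 2 = a ^ 2 + y ^ 2) (hV : V ^ 2 = (ϱ - a) / (ϱ + a)) :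
    2 * V * ϱ / (1 + V ^ 2) = y := by
  have hy_sq : y ^ 2 = (V * (ϱ + a)) ^ 2 := by
    rw [mul_pow, hV]
    field_simp
    linear_combination -hϱy
  have hy_eq : y = V * (ϱ + a) :=
    (pow_left_inj₀ hy (by positivity) two_ne_zero).1 hy_sq
  rw [one_add_sq_eq_of_sq_eq ha hV, hy_eq]
  field_simp

end TangentHalfAngle

lemma le_sqrt_sq_add_sq (a b : ℝ) : a ≤ √(a ^ 2 + b ^ 2) :=
  le_sqrt_of_sq_le (le_add_of_nonneg_right (sq_nonneg b))

/-- The change of variables (55)/(56) of Section 3: properties `u ≤ 1`, `v ≤ 1`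
and the inversion formulas for `x`, `y` and `x + φ`. -/
theorem stmt_16 (x y φ : ℝ) (hx : 0 < x) (hy : 0 ≤ y) (hφ : 0 ≤ φ)
    (ϱ u v V : ℝ)
    (hϱ : ϱ = Real.sqrt ((x + φ) ^ 2 + y ^ 2))
    (hu : u = 2 * x / (x - φ + ϱ))
    (hv : v = Real.sqrt ((x - φ + ϱ) / (x + φ + ϱ)))
    (hV : V = v * Real.sqrt (1 - u)) :
    (0 < u ∧ u ≤ 1) ∧ (0 < v ∧ v ≤ 1) ∧
      x = u * v ^ 2 * ϱ / (1 + V ^ 2) ∧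
      y = 2 * V * ϱ / (1 + V ^ 2) ∧
      x + φ = ϱ * (1 - V ^ 2) / (1 + V ^ 2) := by
  have hϱy : ϱ ^ 2 = (x + φ) ^ 2 + y ^ 2 := hϱ ▸ sq_sqrt (by positivity)
  have hle : x + φ ≤ ϱ := hϱ ▸ le_sqrt_sq_add_sq _ _
  have hϱ0 : 0 < ϱ := by linarith
  have hA : 0 < x - φ + ϱ := by linarith
  have hB : 0 < ϱ + (x + φ) := by linarith
  have hu1 : u ≤ 1 := by rw [hu, div_le_one hA]; linarith
  have hv2 : v ^ 2 = (x - φ + ϱ) / (x + φ + ϱ) := hv ▸ sq_sqrt (by positivity)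
  have hV2 : V ^ 2 = (ϱ - (x + φ)) / (ϱ + (x + φ)) := by
    rw [hV, mul_pow, sq_sqrt (sub_nonneg.2 hu1), hv2, hu]
    field_simp
    ring
  have hv0 : 0 < v := hv ▸ sqrt_pos.2 (by positivity)
  have hV0 : 0 ≤ V := hV ▸ mul_nonneg hv0.le (sqrt_nonneg _)
  refine ⟨⟨by rw [hu]; positivity, hu1⟩,
    ⟨hv0, hv ▸ sqrt_le_one.2 (by rw [div_le_one (by linarith)]; linarith)⟩,
    ?_, (two_mul_mul_div_one_add_sq_of_sq_eq hϱ0 hB hy hV0 hϱy hV2).symm,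
    (mul_one_sub_sq_div_one_add_sq_of_sq_eq hϱ0 hB hV2).symm⟩
  rw [hu, hv2, one_add_sq_eq_of_sq_eq hB hV2]
  field_simp
  ring
end
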